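/- In an AL-monoid, (a,b,c)M holds if and only if (a∧c, b, a∨c)M holds, where (x,y,z)M means x*y + y*z = x*z. -/
import Mathlib

/-- An Autometrized lattice ordered monoid (AL-monoid). -/
class ALMonoid (A : Type*) extends Lattice A, AddCommMonoid A where
  amul : A → A → A
  add_le_add_left' : ∀ a b : A, a ≤ b → ∀ c : A, c + a ≤ c + b
  amul_core : ∀ a b : A, amul a (a ⊓ b) + b = a ⊔ b
  add_contract : ∀ a x y : A, amul (a + x) (a + y) ≤ amul x y
  sup_contract : ∀ a x y : A, amul (a ⊔ x) (a ⊔ y) ≤ amul x y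
  inf_contract : ∀ a x y : A, amul (a ⊓ x) (a ⊓ y) ≤ amul x y
  amul_contract : ∀ a x y : A, amul (amul a x) (amul a y) ≤ amul x y
  inf_amul_sup : ∀ a b : A, amul a (a ⊔ b) ⊓ amul b (a ⊔ b) = 0
  amul_nonneg : ∀ a b : A, 0 ≤ amul a b
  amul_eq_zero_iff : ∀ a b : A, amul a b = 0 ↔ a = b
  amul_comm : ∀ a b : A, amul a b = amul b a
  amul_triangle : ∀ a b c : A, amul a b ≤ amul a c + amul c b

open ALMonoid

infixl:70 " ⋆ " => ALMonoid.amul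

section Lemmas
variable {A : Type*} [ALMonoid A]

lemma dcomm (x y : A) : x ⋆ y = y ⋆ x := amul_comm x y

lemma dle {x y : A} (h : x ≤ y) : y ⋆ x + x = y := by
  have h0 := amul_core y x
  rwa [inf_eq_right.2 h, sup_eq_left.2 h] at h0

lemma dle' {x y : A} (h : x ≤ y) : x ⋆ y + x = y := by rw [dcomm]; exact dle h

lemma dzero {u : A} (h : 0 ≤ u) : u ⋆ 0 = u := by simpa using dle h

lemma addle (c : A) {x y : A} (h : x ≤ y) : c + x ≤ c + y := add_le_add_left' x y h c

lemma rect (x y : A) : x ⋆ (x ⊓ y) = y ⋆ (x ⊔ y) := by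
  apply le_antisymm
  · have h := inf_contract x (x ⊔ y) y
    rw [inf_sup_self] at h
    rw [dcomm y (x ⊔ y)]
    exact h
  · have h := sup_contract y x (x ⊓ y)
    rw [inf_comm x y] at h
    rw [sup_inf_self, sup_comm y x, inf_comm y x] at h
    rw [dcomm y (x ⊔ y)]
    exact h

lemma mono_lo {x y z : A} (hxy : x ≤ y) (hyz : y ≤ z) : x ⋆ y ≤ x ⋆ z := by
  have h := inf_contract y x z
  rwa [inf_eq_right.2 hxy, inf_eq_left.2 hyz] at h

lemma mono_hi {x y z : A} (hxy : x ≤ y) (hyz : y ≤ z) : y ⋆ z ≤ x ⋆ z := by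
  have h := sup_contract y x z
  rwa [sup_eq_left.2 hxy, sup_eq_right.2 hyz] at h

lemma dchain {x y z : A} (hxy : x ≤ y) (hyz : y ≤ z) : x ⋆ y + y ⋆ z = x ⋆ z := by
  refine le_antisymm ?_ (amul_triangle x z y)
  have hu : x ⋆ y ≤ x ⋆ z := mono_lo hxy hyz
  have h2 : y ⋆ z ≤ (x ⋆ z) ⋆ (x ⋆ y) := by
    have h := add_contract x (x ⋆ y) (x ⋆ z)
    have e1 : x + x ⋆ y = y := by rw [add_comm]; exact dle' hxy
    have e2 : x + x ⋆ z = z := by rw [add_comm]; exact dle' (hxy.trans hyz)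
    rw [e1, e2, dcomm (x ⋆ y) (x ⋆ z)] at h
    exact h
  calc x ⋆ y + y ⋆ z ≤ x ⋆ y + (x ⋆ z) ⋆ (x ⋆ y) := addle _ h2
    _ = (x ⋆ z) ⋆ (x ⋆ y) + x ⋆ y := add_comm _ _
    _ = x ⋆ z := dle hu

lemma dsplit (x y : A) : x ⋆ y = x ⋆ (x ⊔ y) + y ⋆ (x ⊔ y) := by
  refine le_antisymm ?_ ?_
  · have h := amul_triangle x y (x ⊔ y)
    rwa [dcomm (x ⊔ y) y] at h
  · have hu : x ⋆ (x ⊔ y) ≤ x ⋆ y := by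
      have h := sup_contract x x y; rwa [sup_idem] at h
    have hv : y ⋆ (x ⊔ y) ≤ x ⋆ y := by
      have h := sup_contract y x y
      rwa [sup_comm y x, sup_idem, dcomm (x ⊔ y) y] at h
    have h0 := inf_amul_sup x y
    have hcore := amul_core (x ⋆ (x ⊔ y)) (y ⋆ (x ⊔ y))
    rw [h0, dzero (amul_nonneg _ _)] at hcore
    rw [hcore]
    exact sup_le hu hv

lemma dms (x y : A) : x ⋆ y = (x ⊓ y) ⋆ (x ⊔ y) := by
  have h := dchain (inf_le_left : x ⊓ y ≤ x) (le_sup_left : x ≤ x ⊔ y)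
  rw [dsplit x y, ← h]
  have hr : y ⋆ (x ⊔ y) = (x ⊓ y) ⋆ x := by rw [← rect x y, dcomm]
  rw [hr, add_comm]

lemma dsplit' (x y : A) : x ⋆ y = y ⋆ (x ⊓ y) + y ⋆ (x ⊔ y) := by
  have h := dsplit x y
  have hr : x ⋆ (x ⊔ y) = y ⋆ (x ⊓ y) := by
    rw [inf_comm x y, rect y x, sup_comm y x]
  rw [h, hr, dcomm y (x ⊔ y)]

lemma val_up {b x y : A} (hx : b ≤ x) (hy : b ≤ y) :
    b ⋆ x + b ⋆ y = b ⋆ (x ⊓ y) + b ⋆ (x ⊔ y) := by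
  have h1 : b ⋆ (x ⊓ y) + (x ⊓ y) ⋆ x = b ⋆ x := dchain (le_inf hx hy) inf_le_left
  have h2 : b ⋆ y + y ⋆ (x ⊔ y) = b ⋆ (x ⊔ y) := dchain hy le_sup_right
  have hr : (x ⊓ y) ⋆ x = y ⋆ (x ⊔ y) := by rw [← rect x y, dcomm]
  calc b ⋆ x + b ⋆ y = (b ⋆ (x ⊓ y) + (x ⊓ y) ⋆ x) + b ⋆ y := by rw [h1]
    _ = b ⋆ (x ⊓ y) + (b ⋆ y + y ⋆ (x ⊔ y)) := by rw [hr]; ac_rfl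
    _ = b ⋆ (x ⊓ y) + b ⋆ (x ⊔ y) := by rw [h2]

lemma val_down {b u v : A} (hu : u ≤ b) (hv : v ≤ b) :
    b ⋆ u + b ⋆ v = b ⋆ (u ⊓ v) + b ⋆ (u ⊔ v) := by
  have h1 : (u ⊓ v) ⋆ v + v ⋆ b = (u ⊓ v) ⋆ b := dchain inf_le_right hv
  have h2 : u ⋆ (u ⊔ v) + (u ⊔ v) ⋆ b = u ⋆ b := dchain le_sup_left (sup_le hu hv)
  have hr : u ⋆ (u ⊔ v) = (u ⊓ v) ⋆ v := by
    have h := rect v u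
    rw [inf_comm v u, sup_comm v u] at h
    rw [dcomm (u ⊓ v) v]
    exact h.symm
  rw [dcomm b u, dcomm b v, dcomm b (u ⊓ v), dcomm b (u ⊔ v), ← h2, hr, ← h1]
  ac_rfl

end Lemmas

section Dist
variable {A : Type*} [ALMonoid A]

lemma dist1 (a b c : A) : b ⊔ (a ⊓ c) = (a ⊔ b) ⊓ (b ⊔ c) := by
  set Z := b ⊔ (a ⊓ c) with hZ
  set X := (a ⊔ b) ⊓ (b ⊔ c) with hX
  have hZX : Z ≤ X := le_inf
    (sup_le le_sup_right (inf_le_left.trans le_sup_left))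
    (sup_le le_sup_left (inf_le_right.trans le_sup_right))
  have hZa : Z ⊔ a = a ⊔ b :=
    le_antisymm
      (sup_le (sup_le le_sup_right (inf_le_left.trans le_sup_left)) le_sup_left)
      (sup_le le_sup_right ((le_sup_left : b ≤ Z).trans le_sup_left))
  have hZc : Z ⊔ c = b ⊔ c :=
    le_antisymm
      (sup_le (sup_le le_sup_left (inf_le_right.trans le_sup_right)) le_sup_right)
      (sup_le ((le_sup_left : b ≤ Z).trans le_sup_left) le_sup_right)
  have bound1 : Z ⋆ X ≤ c ⋆ (a ⊔ c) := by
    have s1 : Z ⋆ X ≤ Z ⋆ (a ⊔ b) := mono_lo hZX inf_le_left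
    have s2 : Z ⋆ (a ⊔ b) = a ⋆ (a ⊓ Z) := by
      rw [← hZa, sup_comm Z a, ← rect a Z]
    have s3 : a ⋆ (a ⊓ Z) ≤ a ⋆ (a ⊓ c) := by
      have hsub : a ⊓ c ≤ a ⊓ Z := le_inf inf_le_left le_sup_right
      have h := mono_hi hsub (inf_le_left : a ⊓ Z ≤ a)
      rwa [dcomm (a ⊓ Z) a, dcomm (a ⊓ c) a] at h
    have s4 : a ⋆ (a ⊓ c) = c ⋆ (a ⊔ c) := rect a c
    exact (s1.trans (s2 ▸ s3)).trans_eq s4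
  have bound2 : Z ⋆ X ≤ a ⋆ (a ⊔ c) := by
    have s1 : Z ⋆ X ≤ Z ⋆ (b ⊔ c) := mono_lo hZX inf_le_right
    have s2 : Z ⋆ (b ⊔ c) = c ⋆ (c ⊓ Z) := by
      rw [← hZc, sup_comm Z c, ← rect c Z]
    have s3 : c ⋆ (c ⊓ Z) ≤ c ⋆ (c ⊓ a) := by
      have hsub : c ⊓ a ≤ c ⊓ Z := le_inf inf_le_left (by rw [inf_comm c a]; exact le_sup_right)
      have h := mono_hi hsub (inf_le_left : c ⊓ Z ≤ c)
      rwa [dcomm (c ⊓ Z) c, dcomm (c ⊓ a) c] at h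
    have s4 : c ⋆ (c ⊓ a) = a ⋆ (a ⊔ c) := by rw [rect c a, sup_comm c a]
    exact (s1.trans (s2 ▸ s3)).trans_eq s4
  have h0 := inf_amul_sup a c
  have ht : Z ⋆ X ≤ 0 := by
    rw [← h0]; exact le_inf bound2 bound1
  have := le_antisymm ht (amul_nonneg Z X)
  exact (amul_eq_zero_iff Z X).1 this

lemma dist2 (a b c : A) : (a ⊓ b) ⊔ (b ⊓ c) = b ⊓ (a ⊔ c) := by
  set Y := (a ⊓ b) ⊔ (b ⊓ c) with hY
  set Z := b ⊓ (a ⊔ c) with hZ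
  have hYZ : Y ≤ Z := sup_le
    (le_inf inf_le_right (inf_le_left.trans le_sup_left))
    (le_inf inf_le_left (inf_le_right.trans le_sup_right))
  have hZa : Z ⊓ a = a ⊓ b :=
    le_antisymm
      (le_inf inf_le_right (inf_le_left.trans inf_le_left))
      (le_inf (le_inf inf_le_right (inf_le_left.trans le_sup_left)) inf_le_left)
  have hZc : Z ⊓ c = b ⊓ c :=
    le_antisymm
      (le_inf (inf_le_left.trans inf_le_left) inf_le_right)
      (le_inf (le_inf inf_le_left (inf_le_right.trans le_sup_right)) inf_le_right)
  have bound1 : Y ⋆ Z ≤ a ⋆ (a ⊔ c) := by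
    have s1 : Y ⋆ Z ≤ (a ⊓ b) ⋆ Z := mono_hi le_sup_left hYZ
    have s2 : (a ⊓ b) ⋆ Z = a ⋆ (a ⊔ Z) := by
      rw [← hZa, dcomm (Z ⊓ a) Z, rect Z a, sup_comm Z a]
    have s3 : a ⋆ (a ⊔ Z) ≤ a ⋆ (a ⊔ c) :=
      mono_lo le_sup_left (sup_le le_sup_left (inf_le_right.trans le_rfl))
    exact (s1.trans_eq s2).trans s3
  have bound2 : Y ⋆ Z ≤ c ⋆ (a ⊔ c) := by
    have s1 : Y ⋆ Z ≤ (b ⊓ c) ⋆ Z := mono_hi le_sup_right hYZ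
    have s2 : (b ⊓ c) ⋆ Z = c ⋆ (c ⊔ Z) := by
      rw [← hZc, dcomm (Z ⊓ c) Z, rect Z c, sup_comm Z c]
    have s3 : c ⋆ (c ⊔ Z) ≤ c ⋆ (c ⊔ (a ⊔ c)) :=
      mono_lo le_sup_left (sup_le le_sup_left (inf_le_right.trans le_sup_right))
    have e : c ⊔ (a ⊔ c) = a ⊔ c := by
      rw [sup_comm a c, ← sup_assoc, sup_idem]
    rw [e] at s3
    exact (s1.trans_eq s2).trans s3
  have h0 := inf_amul_sup a c
  have ht : Y ⋆ Z ≤ 0 := by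
    rw [← h0]; exact le_inf bound1 bound2
  have := le_antisymm ht (amul_nonneg Y Z)
  exact (amul_eq_zero_iff Y Z).1 this

end Dist

theorem stmt8 {A : Type*} [ALMonoid A]
    (hdisj : ∀ x u v : A, x ⊓ u = 0 → x ⊓ v = 0 → x ⊓ (u + v) = 0)
    (a b c : A) :
    a ⋆ b + b ⋆ c = a ⋆ c ↔ (a ⊓ c) ⋆ b + b ⋆ (a ⊔ c) = (a ⊓ c) ⋆ (a ⊔ c) := by
  have hsplit_ab : a ⋆ b = b ⋆ (a ⊓ b) + b ⋆ (a ⊔ b) := dsplit' a b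
  have hsplit_bc : b ⋆ c = b ⋆ (b ⊓ c) + b ⋆ (b ⊔ c) := by
    rw [dcomm b c, dsplit' c b, inf_comm c b, sup_comm c b]
  have hsplit_pb : (a ⊓ c) ⋆ b = b ⋆ ((a ⊓ c) ⊓ b) + b ⋆ ((a ⊓ c) ⊔ b) := dsplit' (a ⊓ c) b
  have hsplit_bq : b ⋆ (a ⊔ c) = b ⋆ ((a ⊔ c) ⊓ b) + b ⋆ ((a ⊔ c) ⊔ b) := by
    rw [dcomm b (a ⊔ c), dsplit' (a ⊔ c) b]
  have hdown := val_down (inf_le_right : a ⊓ b ≤ b) (inf_le_left : b ⊓ c ≤ b)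
  have hup := val_up (le_sup_right : b ≤ a ⊔ b) (le_sup_left : b ≤ b ⊔ c)
  have l1 : (a ⊓ b) ⊓ (b ⊓ c) = (a ⊓ c) ⊓ b := by
    simp [inf_assoc, inf_comm, inf_left_comm, inf_left_idem]
  have l2 : (a ⊓ b) ⊔ (b ⊓ c) = (a ⊔ c) ⊓ b := by
    rw [dist2 a b c, inf_comm b (a ⊔ c)]
  have l3 : (a ⊔ b) ⊓ (b ⊔ c) = (a ⊓ c) ⊔ b := by
    rw [← dist1 a b c, sup_comm b (a ⊓ c)]
  have l4 : (a ⊔ b) ⊔ (b ⊔ c) = (a ⊔ c) ⊔ b := by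
    simp [sup_assoc, sup_comm, sup_left_comm, sup_left_idem]
  have key : a ⋆ b + b ⋆ c = (a ⊓ c) ⋆ b + b ⋆ (a ⊔ c) := by
    rw [hsplit_ab, hsplit_bc, hsplit_pb, hsplit_bq]
    calc b ⋆ (a ⊓ b) + b ⋆ (a ⊔ b) + (b ⋆ (b ⊓ c) + b ⋆ (b ⊔ c))
        = (b ⋆ (a ⊓ b) + b ⋆ (b ⊓ c)) + (b ⋆ (a ⊔ b) + b ⋆ (b ⊔ c)) := by abel
      _ = (b ⋆ ((a ⊓ b) ⊓ (b ⊓ c)) + b ⋆ ((a ⊓ b) ⊔ (b ⊓ c)))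
            + (b ⋆ ((a ⊔ b) ⊓ (b ⊔ c)) + b ⋆ ((a ⊔ b) ⊔ (b ⊔ c))) := by rw [hdown, hup]
      _ = (b ⋆ ((a ⊓ c) ⊓ b) + b ⋆ ((a ⊔ c) ⊓ b))
            + (b ⋆ ((a ⊓ c) ⊔ b) + b ⋆ ((a ⊔ c) ⊔ b)) := by rw [l1, l2, l3, l4]
      _ = b ⋆ ((a ⊓ c) ⊓ b) + b ⋆ ((a ⊓ c) ⊔ b) + (b ⋆ ((a ⊔ c) ⊓ b) + b ⋆ ((a ⊔ c) ⊔ b)) := by abel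
  rw [key, dms a c]
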